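/- arXiv:2302.13979 — 3 statements merged into one kernel-verified Lean document; each statement's English description precedes it below -/
import Mathlib

section
/- The convex conjugate of f(r) = log(∑_{i=1}^n e^{r_i} w_i) is f*(v) = ∑_{i=1}^n v_i log(v_i / w_i) when v lies in the probability simplex (with the convention 0·log 0 = 0), and f*(v) = +∞ otherwise. -/
open Finset Real

/-- The convex conjugate of `f r = log (∑ i, exp (r i) * w i)` equals
`∑ i, v i * log (v i / w i)` when `v` lies in the probability simplex
(with `0 * log 0 = 0`, which holds automatically in `ℝ`), and is `+∞`
(i.e. the supremum is not bounded above) otherwise. -/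
theorem stmt_1 (n : ℕ) (hn : 1 ≤ n) (w : Fin n → ℝ) (hw_pos : ∀ i, 0 < w i) :
    (∀ v : Fin n → ℝ, (∀ i, 0 ≤ v i) → ∑ i, v i = 1 →
      sSup (Set.range (fun r : Fin n → ℝ =>
          ∑ i, v i * r i - Real.log (∑ i, Real.exp (r i) * w i))) =
        ∑ i, v i * Real.log (v i / w i)) ∧
    (∀ v : Fin n → ℝ, ¬ ((∀ i, 0 ≤ v i) ∧ ∑ i, v i = 1) →
      ¬ BddAbove (Set.range (fun r : Fin n → ℝ =>
          ∑ i, v i * r i - Real.log (∑ i, Real.exp (r i) * w i)))) := by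
  have hne : (Finset.univ : Finset (Fin n)).Nonempty := ⟨⟨0, hn⟩, Finset.mem_univ _⟩
  have hsum_pos : ∀ r : Fin n → ℝ, 0 < ∑ i, Real.exp (r i) * w i := fun r =>
    Finset.sum_pos (fun i _ => mul_pos (Real.exp_pos _) (hw_pos i)) hne
  constructor
  · intro v hv hs
    set S := ∑ i, v i * Real.log (v i / w i) with hS
    -- upper bound
    have hub : ∀ r : Fin n → ℝ,
        ∑ i, v i * r i - Real.log (∑ i, Real.exp (r i) * w i) ≤ S := by
      intro r
      have key : Real.exp (∑ i, v i * (r i - Real.log (v i / w i)))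
          ≤ ∑ i, Real.exp (r i) * w i := by
        have h1 : Real.exp (∑ i, v i • (r i - Real.log (v i / w i)))
            ≤ ∑ i, v i * Real.exp (r i - Real.log (v i / w i)) :=
          convexOn_exp.map_sum_le (fun i _ => hv i) hs (fun i _ => Set.mem_univ _)
        simp only [smul_eq_mul] at h1
        refine h1.trans (Finset.sum_le_sum fun i _ => ?_)
        rcases eq_or_lt_of_le (hv i) with h | h
        · rw [← h, zero_mul]; exact (mul_pos (Real.exp_pos _) (hw_pos i)).le
        · have heq : v i * Real.exp (r i - Real.log (v i / w i)) = Real.exp (r i) * w i := by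
            rw [Real.exp_sub, Real.exp_log (div_pos h (hw_pos i))]
            field_simp
          exact heq.le
      have h2 := Real.log_le_log (Real.exp_pos _) key
      rw [Real.log_exp] at h2
      have h3 : ∑ i, v i * (r i - Real.log (v i / w i))
          = ∑ i, v i * r i - S := by
        rw [hS, ← Finset.sum_sub_distrib]
        exact Finset.sum_congr rfl fun i _ => mul_sub _ _ _
      rw [h3] at h2
      linarith
    have hbdd : BddAbove (Set.range (fun r : Fin n → ℝ =>
        ∑ i, v i * r i - Real.log (∑ i, Real.exp (r i) * w i))) := by
      exact ⟨S, by rintro x ⟨r, rfl⟩; exact hub r⟩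
    refine le_antisymm (csSup_le ⟨_, ⟨(0 : Fin n → ℝ), rfl⟩⟩ (by rintro x ⟨r, rfl⟩; exact hub r)) ?_
    -- lower bound: S ≤ sSup
    refine le_of_forall_sub_le fun ε hε => ?_
    set W0 : ℝ := ∑ i ∈ Finset.univ.filter (fun i => ¬ 0 < v i), w i with hW0
    have hW0nn : 0 ≤ W0 := Finset.sum_nonneg fun i _ => (hw_pos i).le
    set M : ℝ := Real.log (W0 / ε + 1) with hM
    set r : Fin n → ℝ := fun i => if 0 < v i then Real.log (v i / w i) else -M with hr
    have hexpM : Real.exp (-M) = (W0 / ε + 1)⁻¹ := by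
      rw [Real.exp_neg, Real.exp_log (by positivity)]
    have hsmall : Real.exp (-M) * W0 ≤ ε := by
      rw [hexpM, inv_mul_le_iff₀ (by positivity)]
      have h5 : (W0 / ε + 1) * ε = W0 + ε := by
        rw [add_mul, div_mul_cancel₀ _ (ne_of_gt hε), one_mul]
      rw [h5]; linarith
    have hc1 : ∑ i, v i * r i = S := by
      refine Finset.sum_congr rfl fun i _ => ?_
      by_cases h : 0 < v i
      · simp [hr, h]
      · have hvi : v i = 0 := le_antisymm (not_lt.1 h) (hv i)
        simp [hr, h, hvi]
    have hc2 : ∑ i, Real.exp (r i) * w i = 1 + Real.exp (-M) * W0 := by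
      rw [← Finset.sum_filter_add_sum_filter_not Finset.univ (fun i => 0 < v i)]
      congr 1
      · have heq : ∀ i ∈ Finset.univ.filter (fun i => 0 < v i),
            Real.exp (r i) * w i = v i := by
          intro i hi
          rw [Finset.mem_filter] at hi
          rw [hr]; simp only [if_pos hi.2]
          rw [Real.exp_log (div_pos hi.2 (hw_pos i)), div_mul_cancel₀ _ (ne_of_gt (hw_pos i))]
        rw [Finset.sum_congr rfl heq, ← hs]
        refine Finset.sum_subset (Finset.filter_subset _ _) fun i _ hni => ?_
        simp only [Finset.mem_filter, Finset.mem_univ, true_and] at hni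
        exact le_antisymm (not_lt.1 hni) (hv i)
      · rw [Finset.mul_sum]
        refine Finset.sum_congr rfl fun i hi => ?_
        rw [Finset.mem_filter] at hi
        rw [hr]; simp only [if_neg hi.2]
    have hval : S - Real.log (1 + Real.exp (-M) * W0)
        ∈ Set.range (fun r : Fin n → ℝ =>
          ∑ i, v i * r i - Real.log (∑ i, Real.exp (r i) * w i)) :=
      ⟨r, by dsimp only; rw [hc1, hc2]⟩
    have hlog : Real.log (1 + Real.exp (-M) * W0) ≤ ε := by
      have hpos : (0:ℝ) < 1 + Real.exp (-M) * W0 := by positivity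
      have := Real.log_le_sub_one_of_pos hpos
      linarith
    have := le_csSup hbdd hval
    linarith
  · -- unboundedness outside the simplex
    rintro v hv ⟨b, hb⟩
    simp only [upperBounds, Set.mem_range, Set.mem_setOf_eq] at hb
    have hb' : ∀ r : Fin n → ℝ,
        ∑ i, v i * r i - Real.log (∑ i, Real.exp (r i) * w i) ≤ b :=
      fun r => hb ⟨r, rfl⟩
    set W : ℝ := ∑ i, w i with hW
    have hWpos : 0 < W := Finset.sum_pos (fun i _ => hw_pos i) hne
    by_cases hpos : ∀ i, 0 ≤ v i
    · have hs : ∑ i, v i ≠ 1 := fun h => hv ⟨hpos, h⟩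
      set s := ∑ i, v i with hsdef
      set t : ℝ := (b + Real.log W + 1) / (s - 1) with ht
      have hb2 := hb' (fun _ => t)
      have e1 : ∑ i, v i * t = s * t := by rw [hsdef, Finset.sum_mul]
      have e2 : ∑ i, Real.exp t * w i = Real.exp t * W := by rw [hW, Finset.mul_sum]
      rw [e1, e2, Real.log_mul (Real.exp_ne_zero t) (ne_of_gt hWpos), Real.log_exp] at hb2
      have hts : t * (s - 1) = b + Real.log W + 1 :=
        div_mul_cancel₀ _ (sub_ne_zero.2 hs)
      have : s * t - t = t * (s - 1) := by ring
      linarith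
    · push_neg at hpos
      obtain ⟨j, hj⟩ := hpos
      set t : ℝ := max 0 ((b + Real.log W + 1) / (-v j)) with ht
      have htnn : 0 ≤ t := le_max_left _ _
      set r : Fin n → ℝ := fun i => if i = j then -t else 0 with hr
      have hb2 := hb' r
      have e1 : ∑ i, v i * r i = v j * (-t) := by
        rw [hr, Finset.sum_eq_single j]
        · simp
        · intro i _ hij; simp [hij]
        · intro h; exact absurd (Finset.mem_univ j) h
      have e2 : ∑ i, Real.exp (r i) * w i ≤ W := by
        refine Finset.sum_le_sum fun i _ => ?_
        have hri : r i ≤ 0 := by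
          rw [hr]; dsimp only; split
          · exact neg_nonpos.2 htnn
          · exact le_rfl
        have h1 : Real.exp (r i) ≤ 1 := by
          rw [← Real.exp_zero]; exact Real.exp_le_exp.2 hri
        nlinarith [(hw_pos i).le, Real.exp_pos (r i)]
      have e3 : Real.log (∑ i, Real.exp (r i) * w i) ≤ Real.log W :=
        Real.log_le_log (hsum_pos r) e2
      have hvj : 0 < -v j := by linarith
      have e4 : (b + Real.log W + 1) ≤ t * (-v j) := by
        have h6 := mul_le_mul_of_nonneg_right
          (le_max_right 0 ((b + Real.log W + 1) / (-v j))) hvj.le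
        rwa [div_mul_cancel₀ _ (ne_of_gt hvj)] at h6
      rw [e1] at hb2
      have e5 : v j * (-t) = t * (-v j) := by ring
      linarith
end

section
/- For a finitely supported (empirical) distribution F̂ = (1/N)∑_j δ_{x_j} and any measurable loss ℓ bounded below, the worst-case expectation over the type-p Wasserstein ball satisfies the dual lower bound: inf_{F : d_p(F, F̂) ≤ ε} E_F[ℓ] ≥ sup_{λ ≥ 0} { (1/N)∑_{j=1}^N inf_{x ∈ ℝ^n} (ℓ(x) + λ‖x − x_j‖^p) − λ ε^p }. -/
open MeasureTheory ENNReal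

/-- The type-`p` Wasserstein distance between two measures on a normed space,
defined via couplings. -/
noncomputable def wassersteinDist {E : Type*} [NormedAddCommGroup E] [MeasurableSpace E]
    (p : ℝ) (μ ν : Measure E) : ℝ≥0∞ :=
  ⨅ (π : Measure (E × E)) (_ : IsProbabilityMeasure π)
    (_ : π.map Prod.fst = μ) (_ : π.map Prod.snd = ν),
    (∫⁻ x, ENNReal.ofReal (‖x.1 - x.2‖ ^ p) ∂π) ^ (1 / p)

/-!
Weak duality. If `π` couples `F` with the empirical measure `F̂`, then pointwise
`ℓ ξ ≥ G ξ' - λ ‖ξ - ξ'‖ ^ p`, where `G w = inf_y (ℓ y + λ ‖y - w‖ ^ p)` is the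
inf-convolution of `ℓ` with `λ ‖·‖ ^ p`. Integrating against `π` gives
`E_F[ℓ] ≥ (1/N) ∑ⱼ G xⱼ - λ E_π ‖ξ - ξ'‖ ^ p`. Since `d_p(F, F̂) ≤ ε`, for every `r > ε`
there is a coupling with transport cost below `r ^ p`; letting `r ↓ ε` gives the bound.
-/

open Filter Topology

section Coupling

variable {X Y : Type*} [MeasurableSpace X] [MeasurableSpace Y] {π : Measure (X × Y)}
  {μ : Measure X} {ν : Measure Y}

theorem integral_sub_integral_le_of_coupling (hfst : π.map Prod.fst = μ)
    (hsnd : π.map Prod.snd = ν) {f : X → ℝ} {g : Y → ℝ} {c : X × Y → ℝ}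
    (hf : Integrable f μ) (hg : Integrable g ν) (hc : Integrable c π)
    (h : ∀ z, g z.2 - c z ≤ f z.1) :
    ∫ y, g y ∂ν - ∫ z, c z ∂π ≤ ∫ x, f x ∂μ := by
  subst hfst hsnd
  have hf' : Integrable (fun z ↦ f z.1) π := hf.comp_aemeasurable measurable_fst.aemeasurable
  have hg' : Integrable (fun z ↦ g z.2) π := hg.comp_aemeasurable measurable_snd.aemeasurable
  rw [integral_map measurable_fst.aemeasurable hf.1, integral_map measurable_snd.aemeasurable hg.1,
    ← integral_sub hg' hc]
  exact integral_mono (hg'.sub hc) hf' h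

end Coupling

section Empirical

variable {α ι : Type*} [MeasurableSpace α] [MeasurableSingletonClass α] [Fintype ι]

theorem integrable_smul_sum_dirac (f : α → ℝ) (x : ι → α) {a : ℝ≥0∞} (ha : a ≠ ∞) :
    Integrable f (a • ∑ j, Measure.dirac (x j)) :=
  (integrable_finsetSum_measure.2 fun _ _ ↦ integrable_dirac enorm_lt_top).smul_measure ha

theorem integral_smul_sum_dirac (f : α → ℝ) (x : ι → α) (a : ℝ≥0∞) :
    ∫ y, f y ∂(a • ∑ j, Measure.dirac (x j)) = a.toReal * ∑ j, f (x j) := by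
  rw [integral_smul_measure, integral_finsetSum_measure
    fun _ _ ↦ integrable_dirac enorm_lt_top, smul_eq_mul]
  simp only [integral_dirac]

end Empirical

theorem integrable_and_integral_le_of_lintegral_ofReal_le {α : Type*} [MeasurableSpace α]
    {μ : Measure α} {f : α → ℝ} (hfm : AEStronglyMeasurable f μ) (hf : 0 ≤ f) {b : ℝ}
    (hb : 0 ≤ b) (h : ∫⁻ a, ENNReal.ofReal (f a) ∂μ ≤ ENNReal.ofReal b) :
    Integrable f μ ∧ ∫ a, f a ∂μ ≤ b := by
  refine ⟨(lintegral_ofReal_ne_top_iff_integrable hfm (ae_of_all _ hf)).1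
    (h.trans_lt ofReal_lt_top).ne, ?_⟩
  rw [integral_eq_lintegral_of_nonneg_ae (ae_of_all _ hf) hfm]
  exact ENNReal.toReal_le_of_le_ofReal hb h

theorem exists_coupling_lintegral_lt_of_wassersteinDist_lt {E : Type*} [NormedAddCommGroup E]
    [MeasurableSpace E] {p : ℝ} (hp : 0 < p) {μ ν : Measure E} {r : ℝ≥0∞}
    (h : wassersteinDist p μ ν < r) :
    ∃ π : Measure (E × E), IsProbabilityMeasure π ∧ π.map Prod.fst = μ ∧
      π.map Prod.snd = ν ∧ ∫⁻ z, ENNReal.ofReal (‖z.1 - z.2‖ ^ p) ∂π < r ^ p := by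
  simpa only [wassersteinDist, iInf_lt_iff, one_div, ENNReal.rpow_inv_lt_iff hp, exists_prop]
    using h

section InfConvolution

variable {E : Type*} [NormedAddCommGroup E]

noncomputable def infConvolution (ℓ : E → ℝ) (lam p : ℝ) (w : E) : ℝ :=
  sInf {s : ℝ | ∃ y : E, s = ℓ y + lam * ‖y - w‖ ^ p}

theorem infConvolution_le {ℓ : E → ℝ} {lam : ℝ} (hlam : 0 ≤ lam) {c : ℝ} (hc : ∀ y, c ≤ ℓ y)
    (p : ℝ) (w y : E) : infConvolution ℓ lam p w ≤ ℓ y + lam * ‖y - w‖ ^ p := by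
  refine csInf_le ⟨c, ?_⟩ ⟨y, rfl⟩
  rintro s ⟨z, rfl⟩
  have := mul_nonneg hlam (Real.rpow_nonneg (norm_nonneg (z - w)) p)
  linarith [hc z]

end InfConvolution

theorem stmt_7_general (n N : ℕ) (hN : 1 ≤ N)
    (x : Fin N → Fin n → ℝ) (ε p : ℝ) (hε : 0 < ε) (hp : 1 ≤ p)
    (ℓ : (Fin n → ℝ) → ℝ) (c : ℝ) (hbdd : ∀ y, c ≤ ℓ y) :
    ∀ lam : ℝ, 0 ≤ lam →
      ∀ F : Measure (Fin n → ℝ), IsProbabilityMeasure F →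
        wassersteinDist p F ((N : ℝ≥0∞)⁻¹ • ∑ j, Measure.dirac (x j)) ≤
          ENNReal.ofReal ε →
        Integrable ℓ F →
        (∫ y, ℓ y ∂F) ≥
          (1 / (N : ℝ)) * ∑ j,
              sInf {s : ℝ | ∃ y : Fin n → ℝ, s = ℓ y + lam * ‖y - x j‖ ^ p}
            - lam * ε ^ p := by
  intro lam hlam F _ hW hℓ
  have hp0 : 0 < p := by linarith
  set A := (1 / (N : ℝ)) * ∑ j, infConvolution ℓ lam p (x j)
  have hcoupling : ∀ r > ε, A - lam * r ^ p ≤ ∫ y, ℓ y ∂F := by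
    intro r hr
    have hr0 : 0 < r := hε.trans hr
    obtain ⟨π, -, hfst, hsnd, hcost⟩ := exists_coupling_lintegral_lt_of_wassersteinDist_lt hp0
      (hW.trans_lt ((ENNReal.ofReal_lt_ofReal_iff hr0).2 hr))
    rw [ENNReal.ofReal_rpow_of_nonneg hr0.le hp0.le] at hcost
    obtain ⟨hcost_int, hcost_le⟩ := integrable_and_integral_le_of_lintegral_ofReal_le
      (by fun_prop (disch := exact hp0.le)) (fun z ↦ Real.rpow_nonneg (norm_nonneg _) p)
      (Real.rpow_nonneg hr0.le p) hcost.le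
    have hN_inv : (N : ℝ≥0∞)⁻¹ ≠ ∞ := by simpa using Nat.one_le_iff_ne_zero.1 hN
    have hdual := integral_sub_integral_le_of_coupling hfst hsnd hℓ
      (integrable_smul_sum_dirac _ x hN_inv) (hcost_int.const_mul lam)
      fun z ↦ by linarith [infConvolution_le hlam hbdd p z.2 z.1]
    rw [integral_smul_sum_dirac, integral_const_mul, ENNReal.toReal_inv, ENNReal.toReal_natCast,
      ← one_div] at hdual
    linarith [mul_le_mul_of_nonneg_left hcost_le hlam]
  have hlim : Tendsto (fun r ↦ A - lam * r ^ p) (𝓝[>] ε) (𝓝 (A - lam * ε ^ p)) :=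
    ((continuous_const.sub (continuous_const.mul (Real.continuous_rpow_const hp0.le))).tendsto
      ε).mono_left nhdsWithin_le_nhds
  exact le_of_tendsto hlim (eventually_nhdsWithin_of_forall hcoupling)

/-- Dual lower bound for the worst-case expectation over a type-`p` Wasserstein
ball around an empirical distribution: for every `λ ≥ 0` and every distribution
`F` in the ball (with `ℓ` `F`-integrable),
`E_F[ℓ] ≥ (1/N) ∑_j inf_x (ℓ x + λ ‖x - x_j‖^p) - λ ε^p`;
i.e. the infimum over the ball dominates the dual supremum over `λ ≥ 0`. -/
theorem stmt_7 (n N : ℕ) (hn : 1 ≤ n) (hN : 1 ≤ N)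
    (x : Fin N → Fin n → ℝ) (ε p : ℝ) (hε : 0 < ε) (hp : 1 ≤ p)
    (ℓ : (Fin n → ℝ) → ℝ) (hmeas : Measurable ℓ) (c : ℝ) (hbdd : ∀ y, c ≤ ℓ y) :
    ∀ lam : ℝ, 0 ≤ lam →
      ∀ F : Measure (Fin n → ℝ), IsProbabilityMeasure F →
        wassersteinDist p F ((N : ℝ≥0∞)⁻¹ • ∑ j, Measure.dirac (x j)) ≤
          ENNReal.ofReal ε →
        Integrable ℓ F →
        (∫ y, ℓ y ∂F) ≥
          (1 / (N : ℝ)) * ∑ j,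
              sInf {s : ℝ | ∃ y : Fin n → ℝ, s = ℓ y + lam * ‖y - x j‖ ^ p}
            - lam * ε ^ p :=
  stmt_7_general n N hN x ε p hε hp ℓ c hbdd
end

section
/- The naive Wasserstein-DRO Kelly objective on simple returns is unbounded below: for any w in the simplex, any ε > 0, and any p ≥ 1, the infimum of E_F[log(1 + ⟨R, w⟩)] over distributions F within type-p Wasserstein distance ε of the empirical distribution of simple returns equals −∞ (the objective is not bounded below), since mass can be moved toward points where 1 + ⟨R, w⟩ → 0. -/
/-
Contaminating the empirical distribution by a point mass `δ` at `x` costs at most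
`δ^(1/p) · maxⱼ ‖x - R̂ⱼ‖` in `W_p`, and turns the expected log-growth into
`(1 - δ) E_F̂ + δ log (1 + ⟨x, w⟩)`. Since `w i₀ ≠ 0`, moving the single coordinate `i₀` of `x`
within a bounded range makes `1 + ⟨x, w⟩` any number in `(0, 1]`; so with `δ` fixed by the
budget `ε`, the second term can be made arbitrarily negative.
-/

open MeasureTheory ENNReal

section Contamination

variable {α : Type*} [MeasurableSpace α]

noncomputable def contamination (δ : ℝ) (ν : Measure α) (x : α) : Measure α :=
  ENNReal.ofReal (1 - δ) • ν + ENNReal.ofReal δ • Measure.dirac x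

lemma ofReal_one_sub_add_ofReal {δ : ℝ} (hδ₀ : 0 ≤ δ) (hδ₁ : δ ≤ 1) :
    ENNReal.ofReal (1 - δ) + ENNReal.ofReal δ = 1 := by
  rw [← ENNReal.ofReal_add (by linarith) hδ₀]
  simp

lemma isProbabilityMeasure_contamination {δ : ℝ} (hδ₀ : 0 ≤ δ) (hδ₁ : δ ≤ 1)
    (ν : Measure α) [IsProbabilityMeasure ν] (x : α) :
    IsProbabilityMeasure (contamination δ ν x) :=
  ⟨by simp [contamination, ofReal_one_sub_add_ofReal hδ₀ hδ₁]⟩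

variable [MeasurableSingletonClass α] {f : α → ℝ} {ν : Measure α}

lemma integrable_contamination (hf : Integrable f ν) (δ : ℝ) (x : α) :
    Integrable f (contamination δ ν x) :=
  (hf.smul_measure ofReal_ne_top).add_measure
    ((integrable_dirac enorm_lt_top).smul_measure ofReal_ne_top)

lemma integral_contamination (hf : Integrable f ν) {δ : ℝ} (hδ₀ : 0 ≤ δ) (hδ₁ : δ ≤ 1)
    (x : α) : ∫ y, f y ∂contamination δ ν x = (1 - δ) * ∫ y, f y ∂ν + δ * f x := by
  rw [contamination, integral_add_measure (hf.smul_measure ofReal_ne_top)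
      ((integrable_dirac enorm_lt_top).smul_measure ofReal_ne_top),
    integral_smul_measure, integral_smul_measure, integral_dirac,
    toReal_ofReal (by linarith), toReal_ofReal hδ₀, smul_eq_mul, smul_eq_mul]

end Contamination

section Empirical

variable {α : Type*} [MeasurableSpace α] {N : ℕ}

lemma isProbabilityMeasure_empirical (hN : N ≠ 0) (x : Fin N → α) :
    IsProbabilityMeasure ((N : ℝ≥0∞)⁻¹ • ∑ j, Measure.dirac (x j)) :=
  ⟨by simp [ENNReal.inv_mul_cancel (Nat.cast_ne_zero.mpr hN) (natCast_ne_top N)]⟩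

variable [MeasurableSingletonClass α]

lemma integrable_empirical (f : α → ℝ) (x : Fin N → α) :
    Integrable f ((N : ℝ≥0∞)⁻¹ • ∑ j, Measure.dirac (x j)) := by
  obtain rfl | hN := eq_or_ne N 0
  · simp
  exact (integrable_finsetSum_measure.mpr fun _ _ ↦ integrable_dirac enorm_lt_top).smul_measure
    (by simpa using hN)

lemma ae_empirical {P : α → Prop} {x : Fin N → α} (h : ∀ j, P (x j)) :
    ∀ᵐ y ∂((N : ℝ≥0∞)⁻¹ • ∑ j, Measure.dirac (x j)), P y := by
  refine Measure.ae_smul_measure ?_ _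
  rw [← Measure.sum_fintype, Measure.ae_sum_iff]
  intro j
  rw [ae_dirac_eq]
  exact h j

end Empirical

section Wasserstein

variable {E : Type*} [NormedAddCommGroup E] [MeasurableSpace E]

lemma wassersteinDist_le_of_map_fst_of_map_snd {p : ℝ} {μ ν : Measure E}
    (π : Measure (E × E)) [IsProbabilityMeasure π] (hμ : π.map Prod.fst = μ)
    (hν : π.map Prod.snd = ν) :
    wassersteinDist p μ ν ≤ (∫⁻ z, ENNReal.ofReal (‖z.1 - z.2‖ ^ p) ∂π) ^ (1 / p) :=
  iInf_le_of_le π <| iInf_le_of_le ‹_› <| iInf_le_of_le hμ <| iInf_le _ hν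

lemma wassersteinDist_contamination_le {p δ ε D : ℝ} (hp : 0 < p) (hδ₀ : 0 ≤ δ) (hδ₁ : δ ≤ 1)
    (hε : 0 ≤ ε) (ν : Measure E) [IsProbabilityMeasure ν] {x : E}
    (hx : ∀ᵐ y ∂ν, ‖x - y‖ ≤ D) (hδD : δ * D ^ p ≤ ε ^ p) :
    wassersteinDist p (contamination δ ν x) ν ≤ ENNReal.ofReal ε := by
  have hdiag : Measurable fun y : E ↦ (y, y) := measurable_id.prodMk measurable_id
  have hx_pair : Measurable fun y : E ↦ (x, y) := measurable_const.prodMk measurable_id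
  -- keep the mass `1 - δ` in place and move the mass `δ` from `ν` onto `x`
  let π : Measure (E × E) :=
    ENNReal.ofReal (1 - δ) • ν.map (fun y ↦ (y, y)) + ENNReal.ofReal δ • ν.map (fun y ↦ (x, y))
  have : IsProbabilityMeasure π :=
    ⟨by simp [π, Measure.map_apply hdiag, Measure.map_apply hx_pair,
      ofReal_one_sub_add_ofReal hδ₀ hδ₁]⟩
  have hfst : π.map Prod.fst = contamination δ ν x := by
    simp only [π, contamination, Measure.map_add _ _ measurable_fst, Measure.map_smul,
      Measure.map_map measurable_fst hdiag, Measure.map_map measurable_fst hx_pair]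
    simp [Function.comp_def, Measure.map_const]
  have hsnd : π.map Prod.snd = ν := by
    simp only [π, Measure.map_add _ _ measurable_snd, Measure.map_smul,
      Measure.map_map measurable_snd hdiag, Measure.map_map measurable_snd hx_pair]
    simp [Function.comp_def, ← add_smul, ofReal_one_sub_add_ofReal hδ₀ hδ₁]
  have hcost : ∫⁻ z, ENNReal.ofReal (‖z.1 - z.2‖ ^ p) ∂π ≤ ENNReal.ofReal (ε ^ p) :=
    calc ∫⁻ z, ENNReal.ofReal (‖z.1 - z.2‖ ^ p) ∂π
        ≤ ENNReal.ofReal (1 - δ) * ∫⁻ y, ENNReal.ofReal (‖y - y‖ ^ p) ∂ν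
          + ENNReal.ofReal δ * ∫⁻ y, ENNReal.ofReal (‖x - y‖ ^ p) ∂ν := by
          rw [lintegral_add_measure, lintegral_smul_measure, lintegral_smul_measure, smul_eq_mul,
            smul_eq_mul]
          gcongr <;> exact lintegral_map_le _ _
      _ ≤ ENNReal.ofReal δ * ENNReal.ofReal (D ^ p) := by
          simp only [sub_self, norm_zero, Real.zero_rpow hp.ne', ENNReal.ofReal_zero,
            lintegral_zero, mul_zero, zero_add]
          gcongr
          calc ∫⁻ y, ENNReal.ofReal (‖x - y‖ ^ p) ∂ν ≤ ∫⁻ _, ENNReal.ofReal (D ^ p) ∂ν :=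
                lintegral_mono_ae <| hx.mono fun y hy ↦ by gcongr
            _ = ENNReal.ofReal (D ^ p) := by simp
      _ ≤ ENNReal.ofReal (ε ^ p) := by
          rw [← ENNReal.ofReal_mul hδ₀]
          exact ENNReal.ofReal_le_ofReal hδD
  calc wassersteinDist p (contamination δ ν x) ν
      ≤ (∫⁻ z, ENNReal.ofReal (‖z.1 - z.2‖ ^ p) ∂π) ^ (1 / p) :=
        wassersteinDist_le_of_map_fst_of_map_snd π hfst hsnd
    _ ≤ ENNReal.ofReal (ε ^ p) ^ (1 / p) := by gcongr
    _ = ENNReal.ofReal ε := by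
        rw [ENNReal.ofReal_rpow_of_nonneg (by positivity) (by positivity),
          ← Real.rpow_mul hε, mul_one_div_cancel hp.ne', Real.rpow_one]

end Wasserstein

theorem exists_wassersteinDist_le_and_integral_lt {E : Type*} [NormedAddCommGroup E]
    [MeasurableSpace E] [MeasurableSingletonClass E] {p ε D : ℝ} (hp : 0 < p) (hε : 0 < ε)
    (hD : 0 < D) (ν : Measure E) [IsProbabilityMeasure ν] {f : E → ℝ} (hf : Integrable f ν)
    (hf_unbdd : ∀ s, ∃ x, f x ≤ s ∧ ∀ᵐ y ∂ν, ‖x - y‖ ≤ D) (M : ℝ) :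
    ∃ F : Measure E, IsProbabilityMeasure F ∧ wassersteinDist p F ν ≤ ENNReal.ofReal ε ∧
      Integrable f F ∧ ∫ y, f y ∂F < M := by
  set δ := min 1 ((ε / D) ^ p)
  have hδ₀ : 0 < δ := lt_min one_pos (by positivity)
  have hδ₁ : δ ≤ 1 := min_le_left _ _
  have hδD : δ * D ^ p ≤ ε ^ p :=
    calc δ * D ^ p ≤ (ε / D) ^ p * D ^ p := by gcongr; exact min_le_right _ _
      _ = ε ^ p := by rw [← Real.mul_rpow (by positivity) hD.le, div_mul_cancel₀ _ hD.ne']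
  obtain ⟨x, hfx, hx⟩ := hf_unbdd ((M - (1 - δ) * ∫ y, f y ∂ν - 1) / δ)
  refine ⟨contamination δ ν x, isProbabilityMeasure_contamination hδ₀.le hδ₁ ν x,
    wassersteinDist_contamination_le hp hδ₀.le hδ₁ hε.le ν hx hδD,
    integrable_contamination hf δ x, ?_⟩
  rw [integral_contamination hf hδ₀.le hδ₁]
  linarith [(le_div_iff₀' hδ₀).mp hfx]

lemma exists_norm_le_log_one_add_sum_mul_le {ι : Type*} [Fintype ι] [DecidableEq ι]
    {w : ι → ℝ} {i₀ : ι} (hw : w i₀ ≠ 0) (s : ℝ) :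
    ∃ x : ι → ℝ, ‖x‖ ≤ |w i₀|⁻¹ ∧ Real.log (1 + ∑ i, x i * w i) ≤ s := by
  set t := Real.exp (min 0 s)
  have ht₀ : 0 < t := Real.exp_pos _
  have ht₁ : t ≤ 1 := Real.exp_le_one_iff.mpr (min_le_left _ _)
  refine ⟨Pi.single i₀ ((t - 1) / w i₀), ?_, ?_⟩
  · have : |t - 1| ≤ 1 := abs_le.mpr ⟨by linarith, by linarith⟩
    rw [Pi.norm_single, Real.norm_eq_abs, abs_div, div_eq_mul_inv]
    exact mul_le_of_le_one_left (by positivity) this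
  · have : 1 + ∑ i, (Pi.single i₀ ((t - 1) / w i₀) : ι → ℝ) i * w i = t := by
      rw [Finset.sum_eq_single_of_mem i₀ (Finset.mem_univ _) fun i _ hi ↦ by simp [hi],
        Pi.single_eq_same, div_mul_cancel₀ _ hw]
      ring
    rw [this, Real.log_exp]
    exact min_le_right _ _

theorem stmt_9_general (n N : ℕ) (hN : 1 ≤ N)
    (Rhat : Fin N → Fin n → ℝ)
    (w : Fin n → ℝ)
    (hw_pos : ∃ i, 0 < w i)
    (ε p : ℝ) (hε : 0 < ε) (hp : 1 ≤ p) :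
    ∀ M : ℝ, ∃ F : Measure (Fin n → ℝ), IsProbabilityMeasure F ∧
      wassersteinDist p F ((N : ℝ≥0∞)⁻¹ • ∑ j, Measure.dirac (Rhat j)) ≤
        ENNReal.ofReal ε ∧
      Integrable (fun R => Real.log (1 + ∑ i, R i * w i)) F ∧
      (∫ R, Real.log (1 + ∑ i, R i * w i) ∂F) < M := by
  obtain ⟨i₀, hi₀⟩ := hw_pos
  have := isProbabilityMeasure_empirical (by omega) Rhat
  refine exists_wassersteinDist_le_and_integral_lt (D := |w i₀|⁻¹ + ∑ j, ‖Rhat j‖) (by linarith) hε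
    (by positivity) _ (integrable_empirical _ Rhat) fun s ↦ ?_
  obtain ⟨x, hx, hfx⟩ := exists_norm_le_log_one_add_sum_mul_le hi₀.ne' s
  refine ⟨x, hfx, ae_empirical fun j ↦ ?_⟩
  calc ‖x - Rhat j‖ ≤ ‖x‖ + ‖Rhat j‖ := norm_sub_le _ _
    _ ≤ |w i₀|⁻¹ + ∑ j, ‖Rhat j‖ :=
      add_le_add hx (Finset.single_le_sum (fun j _ ↦ norm_nonneg (Rhat j)) (Finset.mem_univ j))

/-- The naive Wasserstein-DRO Kelly objective on simple returns is unbounded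
below: for any simplex portfolio `w` with some `w i > 0`, any `ε > 0` and
`p ≥ 1`, and samples in `(-1, ∞)^n`, the worst-case expectation of
`log (1 + ⟨R, w⟩)` over the type-`p` Wasserstein ball of radius `ε` around the
empirical distribution is `-∞`: below any threshold `M` there is a feasible
distribution. -/
theorem stmt_9 (n N : ℕ) (hn : 1 ≤ n) (hN : 1 ≤ N)
    (Rhat : Fin N → Fin n → ℝ) (hRhat : ∀ j i, -1 < Rhat j i)
    (w : Fin n → ℝ) (hw_nonneg : ∀ i, 0 ≤ w i) (hw_sum : ∑ i, w i = 1)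
    (hw_pos : ∃ i, 0 < w i)
    (ε p : ℝ) (hε : 0 < ε) (hp : 1 ≤ p) :
    ∀ M : ℝ, ∃ F : Measure (Fin n → ℝ), IsProbabilityMeasure F ∧
      wassersteinDist p F ((N : ℝ≥0∞)⁻¹ • ∑ j, Measure.dirac (Rhat j)) ≤
        ENNReal.ofReal ε ∧
      Integrable (fun R => Real.log (1 + ∑ i, R i * w i)) F ∧
      (∫ R, Real.log (1 + ∑ i, R i * w i) ∂F) < M :=
  stmt_9_general n N hN Rhat w hw_pos ε p hε hp
end
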